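/- Let n ≥ 2, N ≥ 0 be integers and write N = pn² + qn + r with integers p,q,r ≥ 0 and q,r < n. Then with c and d as below, ∑_{k=0}^N c(⌊k/n⌋) d(⌊(N-k)/n⌋) = (p+1)(N+1) - p(p+1)n²/2. -/

import Mathlib

/-- `c n m` is `1` if `m ≡ 0 (mod n)`, `-1` if `m ≡ 1 (mod n)`, and `0` otherwise. -/
def c (n m : ℕ) : ℤ :=
  if m % n = 0 then 1 else if m % n = 1 then -1 else 0

/-- The `m`-th triangular number `(m+1)(m+2)/2`. -/
def d (m : ℕ) : ℤ := (m + 1) * (m + 2) / 2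

lemma d_eq (m : ℕ) : 2 * d m = ((m:ℤ)+1)*((m:ℤ)+2) := by
  obtain ⟨t, ht⟩ := Int.even_mul_succ_self ((m:ℤ)+1)
  unfold d
  rw [show ((m:ℤ)+1)*((m:ℤ)+1+1) = ((m:ℤ)+1)*((m:ℤ)+2) by ring] at ht
  rw [ht, show t+t = 2*t by ring, Int.mul_ediv_cancel_left _ two_ne_zero]

lemma d_succ (m : ℕ) : d (m+1) = d m + (m:ℤ) + 2 := by
  have h1 := d_eq m; have h2 := d_eq (m+1)
  push_cast at h2
  have h3 : 2 * d (m+1) = 2*(d m + (m:ℤ) + 2) := by linear_combination h2 - h1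
  linarith

lemma d_zero : d 0 = 1 := by norm_num [d]

lemma d_one : d 1 = 3 := by norm_num [d]

lemma c_zero (n : ℕ) : c n 0 = 1 := by simp [c]

lemma c_one (n : ℕ) (hn : 2 ≤ n) : c n 1 = -1 := by
  have h : 1 % n = 1 := Nat.mod_eq_of_lt (by omega)
  simp [c, h]

lemma c_mid (n j : ℕ) (h1 : 2 ≤ j) (h2 : j < n) : c n j = 0 := by
  have h : j % n = j := Nat.mod_eq_of_lt h2
  simp only [c, h]
  rw [if_neg (by omega), if_neg (by omega)]

lemma c_add (n j : ℕ) : c n (n + j) = c n j := by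
  simp [c, Nat.add_mod_left]

lemma hermite (n : ℕ) (hn : 0 < n) : ∀ x : ℕ, ∑ k ∈ Finset.range n, (x + k) / n = x := by
  intro x
  induction x with
  | zero =>
    apply Finset.sum_eq_zero
    intro k hk
    rw [Finset.mem_range] at hk
    simpa using Nat.div_eq_of_lt hk
  | succ x ih =>
    have h1 : ∑ k ∈ Finset.range n, (x + 1 + k) / n
        = ∑ k ∈ Finset.range n, (x + (k+1)) / n := by
      apply Finset.sum_congr rfl; intro k _; congr 1; omega
    have h2 := Finset.sum_range_succ' (fun k => (x + k) / n) n
    have h3 := Finset.sum_range_succ (fun k => (x + k) / n) n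
    have h4 : (x + n) / n = x / n + 1 := Nat.add_div_right x hn
    beta_reduce at h2 h3
    rw [h1]
    have h5 : ∑ k ∈ Finset.range n, (x + (k + 1)) / n + (x + 0) / n
        = ∑ k ∈ Finset.range n, (x + k) / n + (x + n) / n := by rw [← h2, h3]
    rw [ih, h4] at h5
    simp only [Nat.add_zero] at h5
    generalize hS : ∑ k ∈ Finset.range n, (x + (k + 1)) / n = S at h5 ⊢
    generalize x / n = y at h5
    omega

lemma window (n N : ℕ) (hn : 0 < n) (h : n ≤ N + 1) :
    ∑ k ∈ Finset.range n, (N - k) / n = N + 1 - n := by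
  have key : ∀ k ∈ Finset.range n, (N - k) / n = ((N + 1 - n) + (n - 1 - k)) / n := by
    intro k hk; rw [Finset.mem_range] at hk; congr 1; omega
  rw [Finset.sum_congr rfl key,
    Finset.sum_range_reflect (fun k => ((N + 1 - n) + k) / n) n]
  exact hermite n hn (N + 1 - n)

lemma pair (n N k : ℕ) (hn : 2 ≤ n) (hk : k < n) (hN : 2*n ≤ N + 1) :
    d ((N - k)/n) - d ((N - (n + k))/n) = (((N - k)/n : ℕ) : ℤ) + 1 := by
  have h1 : N - (n + k) = (N - k) - n := by omega
  have h3 : (N - k) / n = ((N - k) - n) / n + 1 := by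
    conv_lhs => rw [show N - k = ((N - k) - n) + n by omega]
    exact Nat.add_div_right _ (by omega)
  rw [h1, h3, d_succ, Nat.cast_add, Nat.cast_one]
  ring

lemma Tsum (n N : ℕ) (hn : 2 ≤ n) (hN : 2*n ≤ N + 1) :
    ∑ k ∈ Finset.range (2*n), c n (k/n) * d ((N - k)/n) = (N:ℤ) + 1 := by
  rw [two_mul, Finset.sum_range_add, ← Finset.sum_add_distrib]
  have e : ∀ k ∈ Finset.range n,
      c n (k/n) * d ((N-k)/n) + c n ((n+k)/n) * d ((N-(n+k))/n)
        = (((N-k)/n : ℕ) : ℤ) + 1 := by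
    intro k hk; rw [Finset.mem_range] at hk
    have hnk : (n+k)/n = 1 := by
      rw [Nat.add_comm, Nat.add_div_right k (by omega), Nat.div_eq_of_lt hk]
    rw [Nat.div_eq_of_lt hk, hnk, c_zero n, c_one n hn, one_mul]
    have := pair n N k hn hk hN
    linarith
  rw [Finset.sum_congr rfl e, Finset.sum_add_distrib, Finset.sum_const,
    Finset.card_range]
  have hw : ∑ k ∈ Finset.range n, (((N - k)/n : ℕ) : ℤ) = ((N + 1 - n : ℕ) : ℤ) := by
    rw [← Nat.cast_sum, window n N (by omega) (by omega)]
  rw [hw]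
  simp only [nsmul_eq_mul, mul_one]
  omega

lemma step (n N : ℕ) (hn : 2 ≤ n) (h : n^2 ≤ N) :
    ∑ k ∈ Finset.range (N+1), c n (k/n) * d ((N - k)/n)
      = (∑ k ∈ Finset.range (N - n^2 + 1), c n (k/n) * d ((N - n^2 - k)/n))
          + ((N:ℤ) + 1) := by
  have h2n : 2*n ≤ n^2 := by nlinarith
  have hsplit : N + 1 = n^2 + (N - n^2 + 1) := by omega
  rw [hsplit, Finset.sum_range_add]
  have eA : ∑ k ∈ Finset.range (n^2), c n (k/n) * d ((N - k)/n) = (N:ℤ) + 1 := by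
    rw [← Tsum n N hn (by omega)]
    symm
    apply Finset.sum_subset (Finset.range_subset_range.mpr (by omega))
    intro k hk hk2
    rw [Finset.mem_range] at hk
    rw [Finset.mem_range, not_lt] at hk2
    have hj1 : 2 ≤ k / n := (Nat.le_div_iff_mul_le (by omega)).mpr (by omega)
    have hj2 : k / n < n := (Nat.div_lt_iff_lt_mul (by omega)).mpr
      (by rw [← pow_two]; omega)
    rw [c_mid n _ hj1 hj2, zero_mul]
  have eB : ∑ k ∈ Finset.range (N - n^2 + 1), c n ((n^2 + k)/n) * d ((N - (n^2 + k))/n)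
      = ∑ k ∈ Finset.range (N - n^2 + 1), c n (k/n) * d ((N - n^2 - k)/n) := by
    apply Finset.sum_congr rfl
    intro k _
    have h1 : (n^2 + k)/n = n + k/n := by
      rw [show n^2 + k = n * n + k by ring, Nat.mul_add_div (by omega)]
    have h2 : N - (n^2 + k) = N - n^2 - k := by omega
    rw [h1, c_add, h2]
  rw [eA, eB]
  ring

lemma base (n N : ℕ) (hn : 2 ≤ n) (h : N < n^2) :
    ∑ k ∈ Finset.range (N+1), c n (k/n) * d ((N - k)/n) = (N:ℤ) + 1 := by
  rcases lt_or_ge N n with hA | hB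
  · have e : ∀ k ∈ Finset.range (N+1), c n (k/n) * d ((N-k)/n) = 1 := by
      intro k hk; rw [Finset.mem_range] at hk
      rw [Nat.div_eq_of_lt (by omega), Nat.div_eq_of_lt (by omega), c_zero n,
        d_zero, one_mul]
    rw [Finset.sum_congr rfl e, Finset.sum_const, Finset.card_range]
    simp
  rcases le_or_gt (2*n) (N+1) with hC | hD
  · rw [← Tsum n N hn hC]
    symm
    apply Finset.sum_subset (Finset.range_subset_range.mpr (by omega))
    intro k hk hk2
    rw [Finset.mem_range] at hk
    rw [Finset.mem_range, not_lt] at hk2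
    have hj1 : 2 ≤ k / n := (Nat.le_div_iff_mul_le (by omega)).mpr (by omega)
    have hj2 : k / n < n := (Nat.div_lt_iff_lt_mul (by omega)).mpr
      (by rw [← pow_two]; omega)
    rw [c_mid n _ hj1 hj2, zero_mul]
  · have hsplit : N + 1 = n + (N + 1 - n) := by omega
    rw [hsplit, Finset.sum_range_add]
    have e1 : ∑ k ∈ Finset.range n, c n (k/n) * d ((N - k)/n)
        = 3*((N + 1 - n : ℕ) : ℤ) + ((2*n - (N+1) : ℕ) : ℤ) := by
      rw [show Finset.range n = Finset.range ((N+1-n) + (2*n - (N+1))) by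
        congr 1; omega, Finset.sum_range_add]
      have f1 : ∀ k ∈ Finset.range (N+1-n), c n (k/n) * d ((N-k)/n) = 3 := by
        intro k hk; rw [Finset.mem_range] at hk
        have hd : (N - k)/n = 1 := Nat.div_eq_of_lt_le (by omega) (by omega)
        rw [Nat.div_eq_of_lt (by omega), c_zero n, hd, d_one, one_mul]
      have f2 : ∀ k ∈ Finset.range (2*n - (N+1)),
          c n (((N+1-n) + k)/n) * d ((N - ((N+1-n) + k))/n) = 1 := by
        intro k hk; rw [Finset.mem_range] at hk
        rw [Nat.div_eq_of_lt (by omega), Nat.div_eq_of_lt (by omega), c_zero n,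
          d_zero, one_mul]
      rw [Finset.sum_congr rfl f1, Finset.sum_congr rfl f2, Finset.sum_const,
        Finset.sum_const, Finset.card_range, Finset.card_range]
      simp [mul_comm]
    have e2 : ∑ k ∈ Finset.range (N+1-n), c n ((n+k)/n) * d ((N-(n+k))/n)
        = -((N + 1 - n : ℕ) : ℤ) := by
      have f : ∀ k ∈ Finset.range (N+1-n),
          c n ((n+k)/n) * d ((N-(n+k))/n) = -1 := by
        intro k hk; rw [Finset.mem_range] at hk
        have hnk : (n+k)/n = 1 := by
          rw [Nat.add_comm, Nat.add_div_right k (by omega),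
            Nat.div_eq_of_lt (by omega)]
        rw [hnk, c_one n hn, Nat.div_eq_of_lt (by omega), d_zero, mul_one]
      rw [Finset.sum_congr rfl f, Finset.sum_const, Finset.card_range]
      simp
    rw [e1, e2]
    omega

lemma main (n : ℕ) (hn : 2 ≤ n) (p q r : ℕ) (hq : q < n) (hr : r < n) :
    2 * ∑ k ∈ Finset.range (p*n^2 + q*n + r + 1), c n (k/n) * d ((p*n^2 + q*n + r - k)/n)
      = 2*((p:ℤ)+1)*((p:ℤ)*(n:ℤ)^2+(q:ℤ)*(n:ℤ)+(r:ℤ)+1) - (p:ℤ)*((p:ℤ)+1)*(n:ℤ)^2 := by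
  induction p with
  | zero =>
    have hlt : 0*n^2 + q*n + r < n^2 := by nlinarith
    rw [base n _ hn hlt]
    push_cast
    ring
  | succ p ih =>
    have h1 : n^2 ≤ (p+1)*n^2 := Nat.le_mul_of_pos_left (n^2) (by omega)
    have hge : n^2 ≤ (p+1)*n^2 + q*n + r :=
      le_trans h1 (le_trans (Nat.le_add_right _ (q*n)) (Nat.le_add_right _ r))
    rw [step n _ hn hge]
    have hsub : (p+1)*n^2 + q*n + r - n^2 = p*n^2 + q*n + r :=
      Nat.sub_eq_of_eq_add (by ring)
    rw [hsub]
    push_cast at ih ⊢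
    linear_combination ih

theorem stmt_8 (n N p q r : ℕ) (hn : 2 ≤ n) (hq : q < n) (hr : r < n)
    (hN : N = p * n ^ 2 + q * n + r) :
    ∑ k ∈ Finset.range (N + 1), c n (k / n) * d ((N - k) / n) =
      (p + 1) * (N + 1) - p * (p + 1) * n ^ 2 / 2 := by
  have H := main n hn p q r hq hr
  rw [← hN] at H
  obtain ⟨t, ht⟩ := Int.even_mul_succ_self (p:ℤ)
  have hdiv : (p:ℤ) * ((p:ℤ) + 1) * (n:ℤ)^2 / 2 = t * (n:ℤ)^2 := by
    rw [show (p:ℤ) * ((p:ℤ)+1) * (n:ℤ)^2 = 2 * (t * (n:ℤ)^2) by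
      linear_combination ((n:ℤ)^2) * ht]
    exact Int.mul_ediv_cancel_left _ two_ne_zero
  rw [hdiv]
  have hNZ : (N:ℤ) = (p:ℤ)*(n:ℤ)^2 + (q:ℤ)*(n:ℤ) + (r:ℤ) := by
    rw [hN]; push_cast; ring
  rw [hNZ]
  have H2 : 2 * ∑ k ∈ Finset.range (N + 1), c n (k / n) * d ((N - k) / n)
      = 2 * (((p:ℤ) + 1) * ((p:ℤ) * (n:ℤ) ^ 2 + (q:ℤ) * (n:ℤ) + (r:ℤ) + 1) - t * (n:ℤ) ^ 2) := by
    linear_combination H - (n:ℤ)^2 * ht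
  linarith [H2]
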